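/- Let Q ∈ ℝ^{(m+p)×n} have orthonormal columns (QᵀQ = Iₙ). Let M ∈ ℝ^{m×k}, Ṽ, G̃ ∈ ℝ^{(m+p)×k}, and let B̲ ∈ ℝ^{k×k} be invertible, with Q Qᵀ · [M; 0_{p×k}] = Ṽ B̲ + G̃. Set V = Qᵀ Ṽ. Then I_k − Vᵀ V = (I_k − Ṽᵀ Ṽ) + B̲⁻ᵀ G̃ᵀ (I_{m+p} − Q Qᵀ) G̃ B̲⁻¹, and consequently | ‖I_k − Ṽᵀ Ṽ‖ − ‖I_k − Vᵀ V‖ | ≤ ‖G̃ B̲⁻¹‖². -/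
import Mathlib


open Matrix

open scoped Matrix.Norms.L2Operator

/-- The spectral norm (operator norm induced by the Euclidean vector norm)
of a real matrix. -/
noncomputable def spec {α β : Type*} [Fintype α] [Fintype β] [DecidableEq β]
    (M : Matrix α β ℝ) : ℝ :=
  ‖LinearMap.toContinuousLinearMap (Matrix.toEuclideanLin M)‖

lemma spec_eq_norm {α β : Type*} [Fintype α] [Fintype β] [DecidableEq β]
    (M : Matrix α β ℝ) : spec M = ‖M‖ := rfl

lemma real_conjTranspose {α β : Type*} (M : Matrix α β ℝ) : Mᴴ = Mᵀ := by
  ext i j; simp [Matrix.conjTranspose_apply]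

/-- Remark 3.2: the orthogonality levels `‖I − Ṽᵀ Ṽ‖` and `‖I − Vᵀ V‖` of the explicit
and implicit right Lanczos vectors differ by at most `‖G̃ B̲⁻¹‖²`. -/
theorem stmt13 {m p n k : ℕ}
    (Q : Matrix (Fin m ⊕ Fin p) (Fin n) ℝ) (hQ : Qᵀ * Q = 1)
    (M : Matrix (Fin m) (Fin k) ℝ)
    (Vt G : Matrix (Fin m ⊕ Fin p) (Fin k) ℝ)
    (B : Matrix (Fin k) (Fin k) ℝ) (hB : IsUnit B.det)
    (h : Q * Qᵀ * Matrix.fromRows M (0 : Matrix (Fin p) (Fin k) ℝ) = Vt * B + G)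
    (V : Matrix (Fin n) (Fin k) ℝ) (hV : V = Qᵀ * Vt) :
    1 - Vᵀ * V = (1 - Vtᵀ * Vt) + (B⁻¹)ᵀ * Gᵀ * (1 - Q * Qᵀ) * G * B⁻¹ ∧
      |spec (1 - Vtᵀ * Vt) - spec (1 - Vᵀ * V)| ≤ spec (G * B⁻¹) ^ 2 := by
  set P : Matrix (Fin m ⊕ Fin p) (Fin m ⊕ Fin p) ℝ := 1 - Q * Qᵀ with hPdef
  have hPt : Pᵀ = P := by
    simp [hPdef, Matrix.transpose_sub, Matrix.transpose_mul]
  have hPQ : P * Q = 0 := by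
    simp [hPdef, Matrix.sub_mul, Matrix.mul_assoc, hQ]
  have hP2 : P * P = P := by
    have : P * (1 - Q * Qᵀ) = P := by
      rw [Matrix.mul_sub, Matrix.mul_one, ← Matrix.mul_assoc, hPQ]
      simp
    rwa [← hPdef] at this
  have hBinv : B * B⁻¹ = 1 := Matrix.mul_nonsing_inv B hB
  -- P * Vt = -(P * G * B⁻¹)
  have hPVtB : P * Vt * B = -(P * G) := by
    have h0 : P * (Vt * B + G) = 0 := by
      rw [← h]
      simp only [← Matrix.mul_assoc]
      rw [hPQ]
      simp
    rw [Matrix.mul_add, ← Matrix.mul_assoc] at h0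
    linear_combination (norm := abel) h0
  have hPVt : P * Vt = -(P * G * B⁻¹) := by
    have h2 := congrArg (fun A => A * B⁻¹) hPVtB
    simp only [Matrix.neg_mul] at h2
    rw [Matrix.mul_assoc (P * Vt) B B⁻¹, hBinv, Matrix.mul_one] at h2
    exact h2
  set X : Matrix (Fin m ⊕ Fin p) (Fin k) ℝ := P * G * B⁻¹ with hXdef
  have hXGB : X = P * (G * B⁻¹) := by rw [hXdef, Matrix.mul_assoc]
  -- key: Vtᵀ * P * Vt = Xᵀ * X
  have hkey : Vtᵀ * P * Vt = Xᵀ * X := by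
    have h1 : Vtᵀ * P * Vt = (P * Vt)ᵀ * (P * Vt) := by
      rw [Matrix.transpose_mul, hPt, Matrix.mul_assoc, Matrix.mul_assoc, ← Matrix.mul_assoc P,
        hP2]
    rw [h1, hPVt]
    simp [hXdef]
  have hE : (B⁻¹)ᵀ * Gᵀ * P * G * B⁻¹ = Xᵀ * X := by
    rw [hXdef]
    simp only [Matrix.transpose_mul, hPt, Matrix.mul_assoc]
    rw [← Matrix.mul_assoc P P, hP2]
  -- the identity
  have hid : 1 - Vᵀ * V = (1 - Vtᵀ * Vt) + (B⁻¹)ᵀ * Gᵀ * P * G * B⁻¹ := by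
    rw [hE, ← hkey, hV]
    simp only [hPdef, Matrix.transpose_mul, Matrix.transpose_transpose,
      Matrix.sub_mul, Matrix.mul_sub, Matrix.one_mul, Matrix.mul_one,
      Matrix.mul_assoc]
    abel
  refine ⟨hid, ?_⟩
  -- norm bound
  have hdiff : (1 - Vᵀ * V) - (1 - Vtᵀ * Vt) = Xᵀ * X := by
    rw [hid, hE]; abel
  have hnormP : ‖P‖ ≤ 1 := by
    have h1 : ‖P‖ * ‖P‖ = ‖P‖ := by
      rw [← Matrix.l2_opNorm_conjTranspose_mul_self P, real_conjTranspose, hPt, hP2]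
    nlinarith [norm_nonneg P]
  have hX : ‖X‖ ≤ ‖G * B⁻¹‖ := by
    calc ‖X‖ ≤ ‖P‖ * ‖G * B⁻¹‖ := hXGB ▸ Matrix.l2_opNorm_mul P (G * B⁻¹)
    _ ≤ 1 * ‖G * B⁻¹‖ := by
      exact mul_le_mul_of_nonneg_right hnormP (norm_nonneg _)
    _ = ‖G * B⁻¹‖ := one_mul _
  have hXX : ‖Xᵀ * X‖ = ‖X‖ * ‖X‖ := by
    rw [← real_conjTranspose, Matrix.l2_opNorm_conjTranspose_mul_self]
  simp only [spec_eq_norm]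
  calc |‖1 - Vtᵀ * Vt‖ - ‖1 - Vᵀ * V‖| = |‖1 - Vᵀ * V‖ - ‖1 - Vtᵀ * Vt‖| := abs_sub_comm _ _
  _ ≤ ‖(1 - Vᵀ * V) - (1 - Vtᵀ * Vt)‖ := abs_norm_sub_norm_le _ _
  _ = ‖X‖ * ‖X‖ := by rw [hdiff, hXX]
  _ ≤ ‖G * B⁻¹‖ * ‖G * B⁻¹‖ := mul_le_mul hX hX (norm_nonneg _) (norm_nonneg _)
  _ = ‖G * B⁻¹‖ ^ 2 := (sq _).symm
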